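/- arXiv:2410.12670 — 5 statements merged into one kernel-verified Lean document; each statement's English description precedes it below -/
import Mathlib

section
/- Let $(x_i)_{1\le i\le n}$ be distinct real numbers and $(\lambda_i)_{1\le i\le n}$ nonnegative weights with $\sum_i \lambda_i = 1$. If $\sum_i \lambda_i x_i^2 - (\sum_i \lambda_i x_i)^2 \le \varepsilon$, then $\sum_i \lambda_i(1-\lambda_i) \le 2\varepsilon / \min_{i\ne j}|x_i - x_j|^2$. -/
/-!
Expanding the squares, `∑ᵢ ∑ⱼ λᵢ λⱼ (xᵢ - xⱼ)²` is twice the Jensen gap. Every off-diagonal term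
is at least `m λᵢ λⱼ`, where `m` is the least squared distance between two of the points, and the
off-diagonal weights `λᵢ λⱼ` add up to `(∑ λ)² - ∑ λ² = ∑ λᵢ (1 - λᵢ)`.
-/

open Finset

section WeightedPairs

variable {ι : Type*} [Fintype ι] (lam x : ι → ℝ)

theorem sum_sum_mul_mul_sub_sq :
    ∑ i, ∑ j, lam i * lam j * (x i - x j) ^ 2 =
      2 * ((∑ i, lam i) * ∑ i, lam i * x i ^ 2 - (∑ i, lam i * x i) ^ 2) := by
  have expand : ∀ i j, lam i * lam j * (x i - x j) ^ 2 =
      lam i * x i ^ 2 * lam j - 2 * (lam i * x i) * (lam j * x j) + lam i * (lam j * x j ^ 2) :=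
    fun i j => by ring
  simp only [expand, sum_add_distrib, sum_sub_distrib, ← mul_sum, ← sum_mul]
  ring

variable [DecidableEq ι]

theorem mul_sq_sum_sub_sum_sq_le_sum_sum {m : ℝ} (hlam : ∀ i, 0 ≤ lam i)
    (hm : ∀ i j, i ≠ j → m ≤ (x i - x j) ^ 2) :
    m * ((∑ i, lam i) ^ 2 - ∑ i, lam i ^ 2) ≤ ∑ i, ∑ j, lam i * lam j * (x i - x j) ^ 2 := by
  have pointwise : ∀ i j,
      m * (lam i * lam j) - (if i = j then m * lam i ^ 2 else 0) ≤
        lam i * lam j * (x i - x j) ^ 2 := by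
    intro i j
    by_cases hij : i = j
    · subst hij; simp [sq]
    · simp only [hij, if_false, sub_zero, mul_comm m]
      exact mul_le_mul_of_nonneg_left (hm i j hij) (mul_nonneg (hlam i) (hlam j))
  calc m * ((∑ i, lam i) ^ 2 - ∑ i, lam i ^ 2)
      = ∑ i, ∑ j, (m * (lam i * lam j) - if i = j then m * lam i ^ 2 else 0) := by
        simp only [sum_sub_distrib, sum_ite_eq, mem_univ, if_true, ← mul_sum, ← sum_mul, sq]
        ring
    _ ≤ _ := sum_le_sum fun i _ => sum_le_sum fun j _ => pointwise i j

end WeightedPairs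

section MinSqDist

variable {ι : Type*} (x : ι → ℝ)

theorem sInf_sq_dist_le {i j : ι} (hij : i ≠ j) :
    sInf {d : ℝ | ∃ i j, i ≠ j ∧ d = (x i - x j) ^ 2} ≤ (x i - x j) ^ 2 :=
  csInf_le ⟨0, by rintro d ⟨_, _, _, rfl⟩; positivity⟩ ⟨i, j, hij, rfl⟩

theorem sInf_sq_dist_pos [Finite ι] [Nontrivial ι] (hx : Function.Injective x) :
    0 < sInf {d : ℝ | ∃ i j, i ≠ j ∧ d = (x i - x j) ^ 2} := by
  have hfin : {d : ℝ | ∃ i j, i ≠ j ∧ d = (x i - x j) ^ 2}.Finite :=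
    (Set.finite_range fun p : ι × ι => (x p.1 - x p.2) ^ 2).subset
      (by rintro d ⟨i, j, _, rfl⟩; exact ⟨(i, j), rfl⟩)
  obtain ⟨i, j, hij⟩ := exists_pair_ne ι
  have hne : {d : ℝ | ∃ i j, i ≠ j ∧ d = (x i - x j) ^ 2}.Nonempty := ⟨_, i, j, hij, rfl⟩
  obtain ⟨i, j, hij, hd⟩ := hne.csInf_mem hfin
  rw [hd]
  exact pow_two_pos_of_ne_zero (sub_ne_zero.mpr (hx.ne hij))

end MinSqDist

/-- **Near-equality in quadratic Jensen's inequality.**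
If the Jensen gap `∑ λᵢ xᵢ² - (∑ λᵢ xᵢ)²` is at most `ε` for distinct reals `xᵢ` and
probability weights `λᵢ`, then `∑ λᵢ(1-λᵢ) ≤ 2ε / min_{i≠j} |xᵢ - xⱼ|²`. -/
theorem stmt_0 (n : ℕ) (hn : 2 ≤ n) (x : Fin n → ℝ) (hx : Function.Injective x)
    (lam : Fin n → ℝ) (hlam : ∀ i, 0 ≤ lam i) (hsum : ∑ i, lam i = 1)
    (ε : ℝ)
    (hgap : ∑ i, lam i * (x i) ^ 2 - (∑ i, lam i * x i) ^ 2 ≤ ε) :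
    ∑ i, lam i * (1 - lam i) ≤
      2 * ε / sInf {d : ℝ | ∃ i j, i ≠ j ∧ d = (x i - x j) ^ 2} := by
  have : Nontrivial (Fin n) := Fin.nontrivial_iff_two_le.mpr hn
  have hweights : ∑ i, lam i * (1 - lam i) = (∑ i, lam i) ^ 2 - ∑ i, lam i ^ 2 := by
    simp only [mul_one_sub, sum_sub_distrib, hsum, sq, one_mul]
  rw [le_div_iff₀ (sInf_sq_dist_pos x hx), mul_comm, hweights]
  calc _ ≤ ∑ i, ∑ j, lam i * lam j * (x i - x j) ^ 2 :=
        mul_sq_sum_sub_sum_sq_le_sum_sum lam x hlam fun i j => sInf_sq_dist_le x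
    _ = 2 * (∑ i, lam i * x i ^ 2 - (∑ i, lam i * x i) ^ 2) := by
        rw [sum_sum_mul_mul_sub_sq, hsum, one_mul]
    _ ≤ 2 * ε := by linarith
end

section
/- Let $\hat{A}$ and $\hat{B}$ be Hermitian operators on an $n$-dimensional Hilbert space with spectra $(a_i)$ and $(b_j)$, and orthonormal eigenbases $(\ket{e_i})$, $(\ket{f_j})$ respectively. Then $\|[\hat{A},\hat{B}]\|_{op} \le \frac{\sqrt{n}}{2}\, \max_{i,j}|a_i - a_j|\, \max_{k,l}|b_k - b_l|\; d(\mathcal{B}_{\hat{A}}, \mathcal{B}_{\hat{B}})$, where $d(\mathcal{B}_1,\mathcal{B}_2)^2 = \sum_{i,j}|\langle e_i|f_j\rangle|^2(1-|\langle e_i|f_j\rangle|^2)$. -/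
open scoped InnerProductSpace

/-!
Write `Δa`, `Δb` for the spectral diameters of `A`, `B` and `d` for the distance of the eigenbases.
Bound the operator norm by the Hilbert–Schmidt norm in the eigenbasis `(eᵢ)` of `A`. There the
commutator has entries `(aᵢ - aₖ) ⟨eᵢ, B eₖ⟩`, which vanish on the diagonal, so column `k`
contributes at most `Δa² (‖B eₖ‖² - |⟨eₖ, B eₖ⟩|²)`: `Δa²` times the variance of `B` in the state
`eₖ`. In terms of the distribution `pⱼ = |⟨eₖ, fⱼ⟩|²` this variance is
`½ ∑ⱼ ∑ₗ pⱼ pₗ (bⱼ - bₗ)²`, and as the terms with `j = l` vanish it is at most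
`(Δb²/2) ∑ⱼ pⱼ (1 - pⱼ)`. Summing over `k` gives `‖[A, B]‖² ≤ Δa² Δb² d² / 2`, which is below the
claimed bound as soon as `n ≥ 2`; for `n ≤ 1` the spectrum of `A` is a single point.
-/

section Weights

variable {ι : Type*} [Fintype ι]

theorem sum_sq_sub_mul_le_sq_mul_sum_sub (c w : ι → ℝ) (j : ι) (hw : ∀ l, 0 ≤ w l) {Δ : ℝ}
    (hc : ∀ l, |c l - c j| ≤ Δ) :
    ∑ l, (c l - c j) ^ 2 * w l ≤ Δ ^ 2 * (∑ l, w l - w j) := by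
  classical
  calc ∑ l, (c l - c j) ^ 2 * w l = ∑ l ∈ Finset.univ.erase j, (c l - c j) ^ 2 * w l :=
        (Finset.sum_erase _ (by simp)).symm
    _ ≤ ∑ l ∈ Finset.univ.erase j, Δ ^ 2 * w l :=
        Finset.sum_le_sum fun l _ => mul_le_mul_of_nonneg_right
          (sq_le_sq' (abs_le.1 (hc l)).1 (abs_le.1 (hc l)).2) (hw l)
    _ = Δ ^ 2 * (∑ l, w l - w j) := by
        rw [← Finset.mul_sum, Finset.sum_erase_eq_sub (Finset.mem_univ j)]

theorem sum_mul_sum_sq_sub_mul_eq {p : ι → ℝ} (hp : ∑ j, p j = 1) (c : ι → ℝ) :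
    ∑ j, p j * ∑ l, (c l - c j) ^ 2 * p l = 2 * (∑ j, c j ^ 2 * p j - (∑ j, c j * p j) ^ 2) := by
  have expand (j : ι) : p j * ∑ l, (c l - c j) ^ 2 * p l
      = p j * ∑ l, c l ^ 2 * p l - 2 * (∑ l, c l * p l) * (c j * p j) + c j ^ 2 * p j := by
    have : ∑ l, (c l - c j) ^ 2 * p l
        = ∑ l, c l ^ 2 * p l - 2 * c j * ∑ l, c l * p l + c j ^ 2 * ∑ l, p l := by
      rw [Finset.mul_sum, Finset.mul_sum, ← Finset.sum_sub_distrib, ← Finset.sum_add_distrib]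
      exact Finset.sum_congr rfl fun l _ => by ring
    rw [this, hp]
    ring
  simp only [expand, Finset.sum_add_distrib, Finset.sum_sub_distrib, ← Finset.sum_mul,
    ← Finset.mul_sum, hp]
  ring

theorem sum_sq_mul_sub_sq_sum_mul_le {p : ι → ℝ} (hp0 : ∀ j, 0 ≤ p j) (hp : ∑ j, p j = 1)
    {c : ι → ℝ} {Δ : ℝ} (hc : ∀ j l, |c j - c l| ≤ Δ) :
    ∑ j, c j ^ 2 * p j - (∑ j, c j * p j) ^ 2 ≤ Δ ^ 2 / 2 * ∑ j, p j * (1 - p j) := by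
  have key : 2 * (∑ j, c j ^ 2 * p j - (∑ j, c j * p j) ^ 2) ≤ Δ ^ 2 * ∑ j, p j * (1 - p j) :=
    calc 2 * (∑ j, c j ^ 2 * p j - (∑ j, c j * p j) ^ 2)
        = ∑ j, p j * ∑ l, (c l - c j) ^ 2 * p l := (sum_mul_sum_sq_sub_mul_eq hp c).symm
      _ ≤ ∑ j, p j * (Δ ^ 2 * (∑ l, p l - p j)) :=
        Finset.sum_le_sum fun j _ => mul_le_mul_of_nonneg_left
          (sum_sq_sub_mul_le_sq_mul_sum_sub c p j hp0 fun l => hc l j) (hp0 j)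
      _ = Δ ^ 2 * ∑ j, p j * (1 - p j) := by
        rw [hp, Finset.mul_sum]
        exact Finset.sum_congr rfl fun j _ => by ring
  linarith

end Weights

theorem abs_sub_le_iSup_iSup_abs_sub {ι : Type*} [Finite ι] (c : ι → ℝ) (i j : ι) :
    |c i - c j| ≤ ⨆ i, ⨆ j, |c i - c j| :=
  le_ciSup_of_le (Set.finite_range _).bddAbove i
    (le_ciSup (f := fun j => |c i - c j|) (Set.finite_range _).bddAbove j)

section InnerProduct

variable {𝕜 E F ι κ : Type*} [RCLike 𝕜] [NormedAddCommGroup E] [InnerProductSpace 𝕜 E]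
  [NormedAddCommGroup F] [InnerProductSpace 𝕜 F] [Fintype ι] [Fintype κ]

theorem ContinuousLinearMap.norm_sq_le_sum_sq_norm_inner (T : E →L[𝕜] F)
    (e : OrthonormalBasis ι 𝕜 E) (f : OrthonormalBasis κ 𝕜 F) :
    ‖T‖ ^ 2 ≤ ∑ j, ∑ i, ‖⟪f j, T (e i)⟫_𝕜‖ ^ 2 := by
  have := e.toBasis.finiteDimensional_of_finite
  have := f.toBasis.finiteDimensional_of_finite
  have := FiniteDimensional.complete 𝕜 E
  have := FiniteDimensional.complete 𝕜 F
  have hrow (j : κ) : ‖T.adjoint (f j)‖ ^ 2 = ∑ i, ‖⟪f j, T (e i)⟫_𝕜‖ ^ 2 := by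
    rw [← e.sum_sq_norm_inner_right]
    simp_rw [T.adjoint_inner_right, norm_inner_symm]
  refine (Real.le_sqrt (norm_nonneg _) (by positivity)).1 <|
    T.opNorm_le_bound (Real.sqrt_nonneg _) fun x => ?_
  rw [← Real.sqrt_sq (norm_nonneg x), ← Real.sqrt_mul (by positivity),
    Real.le_sqrt (norm_nonneg _) (by positivity), ← f.sum_sq_norm_inner_right, Finset.sum_mul]
  refine Finset.sum_le_sum fun j _ => ?_
  rw [← hrow, ← T.adjoint_inner_left, ← mul_pow]
  exact pow_le_pow_left₀ (norm_nonneg _) (norm_inner_le_norm _ _) 2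

theorem IsSelfAdjoint.inner_apply_of_apply_eq_smul [CompleteSpace E] {T : E →L[𝕜] E}
    (hT : IsSelfAdjoint T) {v : E} {r : ℝ} (hv : T v = (r : 𝕜) • v) (x : E) :
    ⟪v, T x⟫_𝕜 = r * ⟪v, x⟫_𝕜 := by
  rw [← hT.adjoint_eq, T.adjoint_inner_right, hv, inner_smul_left, RCLike.conj_ofReal]

theorem OrthonormalBasis.sum_sum_sq_norm_inner_mul_one_sub_nonneg (e : OrthonormalBasis ι 𝕜 E)
    (f : OrthonormalBasis κ 𝕜 E) :
    0 ≤ ∑ i, ∑ j, ‖⟪e i, f j⟫_𝕜‖ ^ 2 * (1 - ‖⟪e i, f j⟫_𝕜‖ ^ 2) :=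
  Finset.sum_nonneg fun i _ => Finset.sum_nonneg fun j _ => mul_nonneg (sq_nonneg _) <|
    sub_nonneg.2 <| pow_le_one₀ (norm_nonneg _) <| (norm_inner_le_norm _ _).trans (by simp)

section Eigenbasis

variable [CompleteSpace E] {B : E →L[𝕜] E} {b : κ → ℝ} {f : OrthonormalBasis κ 𝕜 E}

theorem norm_sq_apply_eq_sum_of_eigenbasis (hB : IsSelfAdjoint B)
    (hBf : ∀ j, B (f j) = (b j : 𝕜) • f j) (x : E) :
    ‖B x‖ ^ 2 = ∑ j, b j ^ 2 * ‖⟪x, f j⟫_𝕜‖ ^ 2 := by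
  rw [← f.sum_sq_norm_inner_right]
  refine Finset.sum_congr rfl fun j _ => ?_
  rw [hB.inner_apply_of_apply_eq_smul (hBf j), norm_mul, mul_pow, RCLike.norm_ofReal, sq_abs,
    norm_inner_symm]

theorem inner_self_apply_eq_sum_of_eigenbasis (hB : IsSelfAdjoint B)
    (hBf : ∀ j, B (f j) = (b j : 𝕜) • f j) (x : E) :
    ⟪x, B x⟫_𝕜 = ((∑ j, b j * ‖⟪x, f j⟫_𝕜‖ ^ 2 : ℝ) : 𝕜) := by
  rw [← f.sum_inner_mul_inner, RCLike.ofReal_sum]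
  refine Finset.sum_congr rfl fun j _ => ?_
  rw [hB.inner_apply_of_apply_eq_smul (hBf j), ← inner_conj_symm x, mul_left_comm,
    RCLike.conj_mul, RCLike.norm_conj]
  push_cast
  ring

theorem norm_sq_apply_sub_norm_sq_inner_le (hB : IsSelfAdjoint B)
    (hBf : ∀ j, B (f j) = (b j : 𝕜) • f j) {x : E} (hx : ‖x‖ = 1) {Δ : ℝ}
    (hΔ : ∀ j l, |b j - b l| ≤ Δ) :
    ‖B x‖ ^ 2 - ‖⟪x, B x⟫_𝕜‖ ^ 2
      ≤ Δ ^ 2 / 2 * ∑ j, ‖⟪x, f j⟫_𝕜‖ ^ 2 * (1 - ‖⟪x, f j⟫_𝕜‖ ^ 2) := by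
  rw [norm_sq_apply_eq_sum_of_eigenbasis hB hBf, inner_self_apply_eq_sum_of_eigenbasis hB hBf,
    RCLike.norm_ofReal, sq_abs]
  exact sum_sq_mul_sub_sq_sum_mul_le (fun j => sq_nonneg _)
    (by rw [f.sum_sq_norm_inner_left, hx, one_pow]) hΔ

end Eigenbasis

section Commutator

variable [CompleteSpace E] {A B : E →L[𝕜] E} {a : ι → ℝ} {b : κ → ℝ}
  {e : OrthonormalBasis ι 𝕜 E} {f : OrthonormalBasis κ 𝕜 E}

theorem inner_commutator_apply_of_eigenbasis (hA : IsSelfAdjoint A)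
    (hAe : ∀ i, A (e i) = (a i : 𝕜) • e i) (i k : ι) :
    ⟪e i, (A ∘L B - B ∘L A) (e k)⟫_𝕜 = ((a i - a k : ℝ) : 𝕜) * ⟪e i, B (e k)⟫_𝕜 := by
  simp only [sub_apply, ContinuousLinearMap.comp_apply, inner_sub_right,
    hA.inner_apply_of_apply_eq_smul (hAe i), hAe k, map_smul, inner_smul_right]
  push_cast
  ring

theorem sum_sq_norm_inner_commutator_apply_le (hA : IsSelfAdjoint A)
    (hAe : ∀ i, A (e i) = (a i : 𝕜) • e i) {Δ : ℝ} (hΔ : ∀ i j, |a i - a j| ≤ Δ) (k : ι) :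
    ∑ i, ‖⟪e i, (A ∘L B - B ∘L A) (e k)⟫_𝕜‖ ^ 2
      ≤ Δ ^ 2 * (‖B (e k)‖ ^ 2 - ‖⟪e k, B (e k)⟫_𝕜‖ ^ 2) := by
  simp_rw [inner_commutator_apply_of_eigenbasis hA hAe, norm_mul, mul_pow, RCLike.norm_ofReal,
    sq_abs]
  rw [← e.sum_sq_norm_inner_right (B (e k))]
  exact sum_sq_sub_mul_le_sq_mul_sum_sub a _ k (fun _ => sq_nonneg _) fun i => hΔ i k

theorem norm_commutator_sq_le (hA : IsSelfAdjoint A) (hB : IsSelfAdjoint B)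
    (hAe : ∀ i, A (e i) = (a i : 𝕜) • e i) (hBf : ∀ j, B (f j) = (b j : 𝕜) • f j)
    {Δa Δb : ℝ} (ha : ∀ i j, |a i - a j| ≤ Δa) (hb : ∀ k l, |b k - b l| ≤ Δb) :
    ‖A ∘L B - B ∘L A‖ ^ 2
      ≤ Δa ^ 2 * Δb ^ 2 / 2 * ∑ i, ∑ j, ‖⟪e i, f j⟫_𝕜‖ ^ 2 * (1 - ‖⟪e i, f j⟫_𝕜‖ ^ 2) :=
  calc ‖A ∘L B - B ∘L A‖ ^ 2 ≤ ∑ i, ∑ k, ‖⟪e i, (A ∘L B - B ∘L A) (e k)⟫_𝕜‖ ^ 2 :=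
        (A ∘L B - B ∘L A).norm_sq_le_sum_sq_norm_inner e e
    _ = ∑ k, ∑ i, ‖⟪e i, (A ∘L B - B ∘L A) (e k)⟫_𝕜‖ ^ 2 := Finset.sum_comm
    _ ≤ ∑ k, Δa ^ 2 * (Δb ^ 2 / 2 * ∑ j, ‖⟪e k, f j⟫_𝕜‖ ^ 2 * (1 - ‖⟪e k, f j⟫_𝕜‖ ^ 2)) :=
        Finset.sum_le_sum fun k _ => (sum_sq_norm_inner_commutator_apply_le hA hAe ha k).trans <|
          mul_le_mul_of_nonneg_left
            (norm_sq_apply_sub_norm_sq_inner_le hB hBf (e.orthonormal.1 k) hb) (sq_nonneg _)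
    _ = Δa ^ 2 * Δb ^ 2 / 2 * ∑ i, ∑ j, ‖⟪e i, f j⟫_𝕜‖ ^ 2 * (1 - ‖⟪e i, f j⟫_𝕜‖ ^ 2) := by
        rw [Finset.mul_sum]
        exact Finset.sum_congr rfl fun k _ => by ring

end Commutator

end InnerProduct

/-- **Almost-commuting bound from close eigenbases.**
If Hermitian operators `A`, `B` on an `n`-dimensional Hilbert space have spectra `(aᵢ)`,
`(bⱼ)` and orthonormal eigenbases `(eᵢ)`, `(fⱼ)`, then
`‖[A,B]‖ ≤ (√n/2) · max_{i,j}|aᵢ-aⱼ| · max_{k,l}|bₖ-bₗ| · d(B_A, B_B)`, where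
`d(B_A,B_B)² = ∑_{i,j} |⟨eᵢ|fⱼ⟩|²(1-|⟨eᵢ|fⱼ⟩|²)`. -/
theorem stmt_2 (n : ℕ)
    (A B : EuclideanSpace ℂ (Fin n) →L[ℂ] EuclideanSpace ℂ (Fin n))
    (hA : IsSelfAdjoint A) (hB : IsSelfAdjoint B)
    (a b : Fin n → ℝ)
    (e f : OrthonormalBasis (Fin n) ℂ (EuclideanSpace ℂ (Fin n)))
    (hAe : ∀ i, A (e i) = (a i : ℂ) • e i)
    (hBf : ∀ j, B (f j) = (b j : ℂ) • f j) :
    ‖A.comp B - B.comp A‖ ≤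
      Real.sqrt n / 2 * ((⨆ i, ⨆ j, |a i - a j|) * ⨆ k, ⨆ l, |b k - b l|) *
        Real.sqrt (∑ i, ∑ j, ‖⟪e i, f j⟫_ℂ‖ ^ 2 * (1 - ‖⟪e i, f j⟫_ℂ‖ ^ 2)) := by
  set Δa := ⨆ i, ⨆ j, |a i - a j|
  set Δb := ⨆ k, ⨆ l, |b k - b l|
  set d := ∑ i, ∑ j, ‖⟪e i, f j⟫_ℂ‖ ^ 2 * (1 - ‖⟪e i, f j⟫_ℂ‖ ^ 2)
  have hd : 0 ≤ d := e.sum_sum_sq_norm_inner_mul_one_sub_nonneg f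
  have hrhs : 0 ≤ √n / 2 * (Δa * Δb) * √d := by
    have : 0 ≤ Δa := Real.iSup_nonneg fun i => Real.iSup_nonneg fun j => abs_nonneg _
    have : 0 ≤ Δb := Real.iSup_nonneg fun k => Real.iSup_nonneg fun l => abs_nonneg _
    positivity
  refine (sq_le_sq₀ (norm_nonneg _) hrhs).1 ?_
  rcases le_or_gt n 1 with hn | hn
  · have : Subsingleton (Fin n) := Fin.subsingleton_iff_le_one.2 hn
    calc ‖A ∘L B - B ∘L A‖ ^ 2 ≤ 0 ^ 2 * Δb ^ 2 / 2 * d :=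
          norm_commutator_sq_le hA hB hAe hBf (fun i j => by simp [Subsingleton.elim i j])
            (abs_sub_le_iSup_iSup_abs_sub b)
      _ ≤ _ := by simpa using sq_nonneg _
  · have h2n : (2 : ℝ) ≤ n := by exact_mod_cast hn
    calc ‖A ∘L B - B ∘L A‖ ^ 2 ≤ Δa ^ 2 * Δb ^ 2 / 2 * d :=
          norm_commutator_sq_le hA hB hAe hBf (abs_sub_le_iSup_iSup_abs_sub a)
            (abs_sub_le_iSup_iSup_abs_sub b)
      _ ≤ n / 4 * (Δa ^ 2 * Δb ^ 2) * d := by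
          have := mul_nonneg (mul_nonneg (sq_nonneg Δa) (sq_nonneg Δb)) hd
          nlinarith
      _ = (√n / 2 * (Δa * Δb) * √d) ^ 2 := by
          rw [mul_pow, mul_pow, div_pow, mul_pow, Real.sq_sqrt hd,
            Real.sq_sqrt (Nat.cast_nonneg n)]
          norm_num
end

section
/- Let $\hat{A}$ and $\hat{B}$ be Hermitian operators on an $n$-dimensional Hilbert space with non-degenerate spectra $(a_i)$ and $(b_j)$ and orthonormal eigenbases $(\ket{e_i})$, $(\ket{f_j})$. Then $d(\mathcal{B}_{\hat{A}}, \mathcal{B}_{\hat{B}}) \le \frac{\sqrt{2n}}{c}\, \|[\hat{A},\hat{B}]\|_{op}$, where $c = \min_{i\ne j}|a_i - a_j| \cdot \min_{k\ne l}|b_k - b_l|$ and $d(\mathcal{B}_1,\mathcal{B}_2)^2 = \sum_{i,j}|\langle e_i|f_j\rangle|^2(1-|\langle e_i|f_j\rangle|^2)$. -/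
open scoped BigOperators InnerProductSpace

/-!
Write `pᵢⱼ = |⟨eᵢ, fⱼ⟩|²`. For fixed `i` this is the distribution of `B` in the state `eᵢ`, so
`∑ⱼ ∑ₗ (bⱼ - bₗ)² pᵢⱼ pᵢₗ = 2 Var_{eᵢ}(B)`; since `1 - pᵢⱼ = ∑_{l ≠ j} pᵢₗ`, the spectral gap `β` of
`B` gives `β² ∑ⱼ pᵢⱼ (1 - pᵢⱼ) ≤ 2 Var_{eᵢ}(B)`. On the other hand
`Var_{eᵢ}(B) = ∑_{k ≠ i} |⟨eₖ, B eᵢ⟩|²` and `⟨eₖ, [A, B] eᵢ⟩ = (aₖ - aᵢ) ⟨eₖ, B eᵢ⟩`, so the spectral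
gap `α` of `A` gives `α² Var_{eᵢ}(B) ≤ ‖[A, B] eᵢ‖² ≤ ‖[A, B]‖²`. Summing over `i`,
`α² β² d² ≤ 2n ‖[A, B]‖²`.
-/

open Finset

/-- `sInf ∅ = 0`, so this is `0` when `ι` has fewer than two elements. -/
noncomputable def minGap {ι : Type*} (a : ι → ℝ) : ℝ :=
  sInf {r : ℝ | ∃ i j, i ≠ j ∧ r = |a i - a j|}

section minGap

variable {ι : Type*} (a : ι → ℝ)

lemma minGap_nonneg : 0 ≤ minGap a :=
  Real.sInf_nonneg fun _ ⟨_, _, _, h⟩ => h ▸ abs_nonneg _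

lemma minGap_sq_le {i j : ι} (hij : i ≠ j) : minGap a ^ 2 ≤ (a i - a j) ^ 2 := by
  have h : minGap a ≤ |a i - a j| := by
    refine csInf_le ⟨0, ?_⟩ ⟨i, j, hij, rfl⟩
    rintro _ ⟨_, _, _, rfl⟩
    exact abs_nonneg _
  simpa only [sq_abs] using pow_le_pow_left₀ (minGap_nonneg a) h 2

lemma minGap_pos [Finite ι] [Nontrivial ι] {a : ι → ℝ} (ha : Function.Injective a) :
    0 < minGap a := by
  set gaps := {r : ℝ | ∃ i j, i ≠ j ∧ r = |a i - a j|}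
  have hfin : gaps.Finite :=
    (Set.finite_range fun p : ι × ι => |a p.1 - a p.2|).subset
      (by rintro _ ⟨i, j, -, rfl⟩; exact ⟨(i, j), rfl⟩)
  obtain ⟨i, j, hij⟩ := exists_pair_ne ι
  have hne : gaps.Nonempty := ⟨_, i, j, hij, rfl⟩
  obtain ⟨k, l, hkl, h⟩ := hne.csInf_mem hfin
  rw [minGap, h]
  exact abs_pos.mpr (sub_ne_zero.mpr (ha.ne hkl))

end minGap

section Weights

variable {ι : Type*} [Fintype ι]

lemma mul_sum_sub_le_sum_mul {c : ℝ} {d w : ι → ℝ} {i : ι} (hd : ∀ k, k ≠ i → c ≤ d k)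
    (hdi : 0 ≤ d i) (hw : ∀ k, 0 ≤ w k) : c * (∑ k, w k - w i) ≤ ∑ k, d k * w k := by
  classical
  rw [← add_sum_erase _ _ (mem_univ i), ← add_sum_erase _ _ (mem_univ i), add_sub_cancel_left,
    mul_sum]
  have hoff : ∑ k ∈ univ.erase i, c * w k ≤ ∑ k ∈ univ.erase i, d k * w k :=
    sum_le_sum fun k hk => mul_le_mul_of_nonneg_right (hd k (ne_of_mem_erase hk)) (hw k)
  linarith [mul_nonneg hdi (hw i)]

lemma sum_sum_sq_sub_mul_mul (b p : ι → ℝ) (hp : ∑ j, p j = 1) :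
    ∑ j, ∑ l, (b j - b l) ^ 2 * (p j * p l) =
      2 * (∑ j, b j ^ 2 * p j - (∑ j, b j * p j) ^ 2) := by
  have hexp : ∀ j l, (b j - b l) ^ 2 * (p j * p l) =
      b j ^ 2 * p j * p l + b l ^ 2 * p l * p j - 2 * (b j * p j) * (b l * p l) := fun j l => by
    ring
  simp_rw [hexp, sum_sub_distrib, sum_add_distrib, ← mul_sum, ← sum_mul, hp]
  rw [← mul_sum, hp, ← mul_sum]
  ring

lemma mul_sum_mul_one_sub_le_of_sq_sub_ge (b p : ι → ℝ) {c : ℝ}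
    (hc : ∀ j l, j ≠ l → c ≤ (b j - b l) ^ 2) (hp0 : ∀ j, 0 ≤ p j) (hp : ∑ j, p j = 1) :
    c * ∑ j, p j * (1 - p j) ≤ 2 * (∑ j, b j ^ 2 * p j - (∑ j, b j * p j) ^ 2) := by
  rw [← sum_sum_sq_sub_mul_mul b p hp, mul_sum]
  refine sum_le_sum fun j _ => ?_
  calc c * (p j * (1 - p j)) = p j * (c * (∑ l, p l - p j)) := by rw [hp]; ring
    _ ≤ p j * ∑ l, (b j - b l) ^ 2 * p l :=
      mul_le_mul_of_nonneg_left
        (mul_sum_sub_le_sum_mul (fun l hl => hc j l hl.symm) (by simp) hp0) (hp0 j)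
    _ = ∑ l, (b j - b l) ^ 2 * (p j * p l) := by
      rw [mul_sum]; exact sum_congr rfl fun l _ => by ring

end Weights

section Eigenbasis

variable {𝕜 E ι : Type*} [RCLike 𝕜] [NormedAddCommGroup E] [InnerProductSpace 𝕜 E] [Fintype ι]
  {T : E →L[𝕜] E} {b : ι → ℝ}

noncomputable def OrthonormalBasis.distSq (e f : OrthonormalBasis ι 𝕜 E) : ℝ :=
  ∑ i, ∑ j, ‖⟪e i, f j⟫_𝕜‖ ^ 2 * (1 - ‖⟪e i, f j⟫_𝕜‖ ^ 2)

noncomputable def ContinuousLinearMap.variance (T : E →L[𝕜] E) (x : E) : ℝ :=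
  ‖T x‖ ^ 2 - ‖⟪x, T x⟫_𝕜‖ ^ 2

lemma OrthonormalBasis.inner_apply_of_apply_eq_smul (f : OrthonormalBasis ι 𝕜 E)
    (hT : ∀ j, T (f j) = (b j : 𝕜) • f j) (j : ι) (x : E) :
    ⟪f j, T x⟫_𝕜 = (b j : 𝕜) * ⟪f j, x⟫_𝕜 := by
  classical
  have h : (innerₛₗ 𝕜 (f j)).comp (T : E →ₗ[𝕜] E) = (b j : 𝕜) • innerₛₗ 𝕜 (f j) :=
    f.toBasis.ext fun k => by
      simp only [OrthonormalBasis.coe_toBasis, LinearMap.comp_apply, ContinuousLinearMap.coe_coe,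
        hT, LinearMap.smul_apply, innerₛₗ_apply_apply, inner_smul_right, f.inner_eq_ite]
      split_ifs with hjk <;> simp [hjk]
  exact LinearMap.congr_fun h x

lemma OrthonormalBasis.norm_apply_sq_of_apply_eq_smul (f : OrthonormalBasis ι 𝕜 E)
    (hT : ∀ j, T (f j) = (b j : 𝕜) • f j) (x : E) :
    ‖T x‖ ^ 2 = ∑ j, b j ^ 2 * ‖⟪x, f j⟫_𝕜‖ ^ 2 := by
  rw [← f.sum_sq_norm_inner_right]
  refine sum_congr rfl fun j _ => ?_
  rw [f.inner_apply_of_apply_eq_smul hT, norm_mul, mul_pow, RCLike.norm_ofReal, sq_abs,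
    norm_inner_symm]

lemma OrthonormalBasis.inner_self_apply_of_apply_eq_smul (f : OrthonormalBasis ι 𝕜 E)
    (hT : ∀ j, T (f j) = (b j : 𝕜) • f j) (x : E) :
    ⟪x, T x⟫_𝕜 = ((∑ j, b j * ‖⟪x, f j⟫_𝕜‖ ^ 2 : ℝ) : 𝕜) := by
  rw [← f.sum_inner_mul_inner, RCLike.ofReal_sum]
  refine sum_congr rfl fun j _ => ?_
  rw [f.inner_apply_of_apply_eq_smul hT, ← inner_conj_symm x, mul_left_comm, RCLike.conj_mul,
    RCLike.norm_conj]
  push_cast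
  ring

lemma OrthonormalBasis.mul_sum_mul_one_sub_le_two_mul_variance (f : OrthonormalBasis ι 𝕜 E)
    (hT : ∀ j, T (f j) = (b j : 𝕜) • f j) {c : ℝ} (hc : ∀ j l, j ≠ l → c ≤ (b j - b l) ^ 2)
    {x : E} (hx : ‖x‖ = 1) :
    c * ∑ j, ‖⟪x, f j⟫_𝕜‖ ^ 2 * (1 - ‖⟪x, f j⟫_𝕜‖ ^ 2) ≤ 2 * T.variance x := by
  rw [ContinuousLinearMap.variance, f.norm_apply_sq_of_apply_eq_smul hT,
    f.inner_self_apply_of_apply_eq_smul hT, RCLike.norm_ofReal, sq_abs]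
  exact mul_sum_mul_one_sub_le_of_sq_sub_ge b _ hc (fun _ => by positivity)
    (by rw [f.sum_sq_norm_inner_left, hx, one_pow])

lemma OrthonormalBasis.mul_variance_le_norm_commutator_apply_sq (e : OrthonormalBasis ι 𝕜 E)
    {S : E →L[𝕜] E} {a : ι → ℝ} (hS : ∀ i, S (e i) = (a i : 𝕜) • e i) {c : ℝ}
    (hc : ∀ k i, k ≠ i → c ≤ (a k - a i) ^ 2) (i : ι) :
    c * T.variance (e i) ≤ ‖(S.comp T - T.comp S) (e i)‖ ^ 2 := by
  have hcomm : ∀ k, ⟪e k, (S.comp T - T.comp S) (e i)⟫_𝕜 =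
      ((a k - a i : ℝ) : 𝕜) * ⟪e k, T (e i)⟫_𝕜 := fun k => by
    simp only [sub_apply, ContinuousLinearMap.comp_apply, inner_sub_right,
      e.inner_apply_of_apply_eq_smul hS, hS i, map_smul, inner_smul_right]
    push_cast
    ring
  rw [ContinuousLinearMap.variance, ← e.sum_sq_norm_inner_right (T (e i)),
    ← e.sum_sq_norm_inner_right ((S.comp T - T.comp S) (e i))]
  simp only [hcomm, norm_mul, mul_pow, RCLike.norm_ofReal, sq_abs]
  exact mul_sum_sub_le_sum_mul (fun k hk => hc k i hk) (sq_nonneg _) (fun _ => sq_nonneg _)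

lemma OrthonormalBasis.distSq_eq_zero_of_subsingleton [Subsingleton ι]
    (e f : OrthonormalBasis ι 𝕜 E) : e.distSq f = 0 := by
  have hunit : ∀ i j, ‖⟪e i, f j⟫_𝕜‖ ^ 2 = 1 := fun i j => by
    rw [← Fintype.sum_subsingleton (fun j => ‖⟪e i, f j⟫_𝕜‖ ^ 2) j, f.sum_sq_norm_inner_left,
      e.norm_eq_one, one_pow]
  simp only [OrthonormalBasis.distSq, hunit, sub_self, mul_zero, sum_const_zero]

lemma OrthonormalBasis.mul_mul_distSq_le_norm_commutator_sq (e f : OrthonormalBasis ι 𝕜 E)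
    {S : E →L[𝕜] E} {a : ι → ℝ} (hS : ∀ i, S (e i) = (a i : 𝕜) • e i)
    (hT : ∀ j, T (f j) = (b j : 𝕜) • f j) {α β : ℝ} (hα₀ : 0 ≤ α)
    (hα : ∀ k i, k ≠ i → α ≤ (a k - a i) ^ 2) (hβ : ∀ j l, j ≠ l → β ≤ (b j - b l) ^ 2) :
    α * β * e.distSq f ≤ 2 * Fintype.card ι * ‖S.comp T - T.comp S‖ ^ 2 := by
  have hrow : ∀ i, α * (β * ∑ j, ‖⟪e i, f j⟫_𝕜‖ ^ 2 * (1 - ‖⟪e i, f j⟫_𝕜‖ ^ 2)) ≤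
      2 * ‖S.comp T - T.comp S‖ ^ 2 := fun i => calc
    _ ≤ α * (2 * T.variance (e i)) :=
      mul_le_mul_of_nonneg_left (f.mul_sum_mul_one_sub_le_two_mul_variance hT hβ
        (e.norm_eq_one i)) hα₀
    _ ≤ 2 * ‖(S.comp T - T.comp S) (e i)‖ ^ 2 := by
      rw [mul_left_comm]
      gcongr
      exact e.mul_variance_le_norm_commutator_apply_sq hS hα i
    _ ≤ 2 * ‖S.comp T - T.comp S‖ ^ 2 := by
      gcongr
      exact (S.comp T - T.comp S).unit_le_opNorm _ (e.norm_eq_one i).le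
  calc α * β * e.distSq f ≤ ∑ _i : ι, 2 * ‖S.comp T - T.comp S‖ ^ 2 := by
        rw [OrthonormalBasis.distSq, mul_sum]
        exact sum_le_sum fun i _ => by linarith [hrow i]
    _ = 2 * Fintype.card ι * ‖S.comp T - T.comp S‖ ^ 2 := by
        rw [sum_const, card_univ, nsmul_eq_mul]
        ring

end Eigenbasis

lemma Real.sqrt_le_sqrt_div_mul_of_sq_mul_le {c D N K : ℝ} (hc : 0 < c) (hK : 0 ≤ K)
    (h : c ^ 2 * D ≤ N * K ^ 2) : √D ≤ √N / c * K := by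
  rw [div_mul_eq_mul_div, le_div_iff₀ hc, ← Real.sqrt_sq hc.le, ← Real.sqrt_sq hK,
    ← Real.sqrt_mul' _ (sq_nonneg c), ← Real.sqrt_mul' _ (sq_nonneg K)]
  exact Real.sqrt_le_sqrt (by linarith)

theorem stmt_3_general (n : ℕ)
    (A B : EuclideanSpace ℂ (Fin n) →L[ℂ] EuclideanSpace ℂ (Fin n))
    (a b : Fin n → ℝ) (ha : Function.Injective a) (hb : Function.Injective b)
    (e f : OrthonormalBasis (Fin n) ℂ (EuclideanSpace ℂ (Fin n)))
    (hAe : ∀ i, A (e i) = (a i : ℂ) • e i)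
    (hBf : ∀ j, B (f j) = (b j : ℂ) • f j) :
    Real.sqrt (∑ i, ∑ j, ‖⟪e i, f j⟫_ℂ‖ ^ 2 * (1 - ‖⟪e i, f j⟫_ℂ‖ ^ 2)) ≤
      Real.sqrt (2 * n) /
        (sInf {r : ℝ | ∃ i j, i ≠ j ∧ r = |a i - a j|} *
          sInf {r : ℝ | ∃ k l, k ≠ l ∧ r = |b k - b l|}) *
        ‖A.comp B - B.comp A‖ := by
  change √(e.distSq f) ≤ _ / (minGap a * minGap b) * _
  rcases subsingleton_or_nontrivial (Fin n) with hn | hn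
  · rw [e.distSq_eq_zero_of_subsingleton, Real.sqrt_zero]
    have := minGap_nonneg a
    have := minGap_nonneg b
    positivity
  refine Real.sqrt_le_sqrt_div_mul_of_sq_mul_le
    (mul_pos (minGap_pos ha) (minGap_pos hb)) (norm_nonneg _) ?_
  simpa only [mul_pow, Fintype.card_fin] using
    e.mul_mul_distSq_le_norm_commutator_sq f hAe hBf (sq_nonneg _)
      (fun _ _ => minGap_sq_le a) (fun _ _ => minGap_sq_le b)

/-- **Close eigenbases from almost commuting.**
If Hermitian operators `A`, `B` on an `n`-dimensional Hilbert space have non-degenerate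
spectra `(aᵢ)`, `(bⱼ)` and orthonormal eigenbases `(eᵢ)`, `(fⱼ)`, then
`d(B_A,B_B) ≤ (√(2n)/c) ‖[A,B]‖` with `c = min_{i≠j}|aᵢ-aⱼ| · min_{k≠l}|bₖ-bₗ|`. -/
theorem stmt_3 (n : ℕ)
    (A B : EuclideanSpace ℂ (Fin n) →L[ℂ] EuclideanSpace ℂ (Fin n))
    (hA : IsSelfAdjoint A) (hB : IsSelfAdjoint B)
    (a b : Fin n → ℝ) (ha : Function.Injective a) (hb : Function.Injective b)
    (e f : OrthonormalBasis (Fin n) ℂ (EuclideanSpace ℂ (Fin n)))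
    (hAe : ∀ i, A (e i) = (a i : ℂ) • e i)
    (hBf : ∀ j, B (f j) = (b j : ℂ) • f j) :
    Real.sqrt (∑ i, ∑ j, ‖⟪e i, f j⟫_ℂ‖ ^ 2 * (1 - ‖⟪e i, f j⟫_ℂ‖ ^ 2)) ≤
      Real.sqrt (2 * n) /
        (sInf {r : ℝ | ∃ i j, i ≠ j ∧ r = |a i - a j|} *
          sInf {r : ℝ | ∃ k l, k ≠ l ∧ r = |b k - b l|}) *
        ‖A.comp B - B.comp A‖ :=
  stmt_3_general n A B a b ha hb e f hAe hBf
end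

section
/- Let $\rho$ be a density matrix on an $n$-dimensional Hilbert space with eigenbasis $\mathcal{B}_\rho = (\ket{f_k})$, and let $\mathcal{B} = (\ket{e_i})$ be any orthonormal basis. Then $\sum_{i\ne j}|\langle e_i|\rho\, e_j\rangle|^2 \le d(\mathcal{B}_\rho, \mathcal{B})^2$, where $d(\mathcal{B}_\rho,\mathcal{B})^2 = \sum_{i,k}|\langle e_i|f_k\rangle|^2(1-|\langle e_i|f_k\rangle|^2)$. -/
open scoped InnerProductSpace

/-!
Write `pᵢₖ = |⟨eᵢ|fₖ⟩|²`; each row `(pᵢₖ)ₖ` is a probability vector by Parseval. Since `ρ` is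
self-adjoint, Parseval in the basis `(eⱼ)` and then in `(fₖ)` gives
`∑ⱼ |⟨eᵢ|ρ eⱼ⟩|² = ‖ρ eᵢ‖² = ∑ₖ λₖ² pᵢₖ`, while the diagonal entry is `⟨eᵢ|ρ eᵢ⟩ = ∑ₖ λₖ pᵢₖ`.
So the off-diagonal part of row `i` is `∑ₖ λₖ² pᵢₖ - (∑ₖ λₖ pᵢₖ)²`, and dropping the cross terms
of the square (all nonnegative) bounds it by `∑ₖ λₖ² pᵢₖ (1 - pᵢₖ) ≤ ∑ₖ pᵢₖ (1 - pᵢₖ)`.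
-/

theorem Finset.sum_sq_mul_sub_sq_sum_mul_le {ι : Type*} (s : Finset ι) {l p : ι → ℝ}
    (hl0 : ∀ k ∈ s, 0 ≤ l k) (hl1 : ∀ k ∈ s, l k ≤ 1) (hp0 : ∀ k ∈ s, 0 ≤ p k)
    (hp1 : ∀ k ∈ s, p k ≤ 1) :
    ∑ k ∈ s, l k ^ 2 * p k - (∑ k ∈ s, l k * p k) ^ 2 ≤ ∑ k ∈ s, p k * (1 - p k) := by
  have hcross : ∑ k ∈ s, (l k * p k) ^ 2 ≤ (∑ k ∈ s, l k * p k) ^ 2 :=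
    sum_sq_le_sq_sum_of_nonneg fun k hk => mul_nonneg (hl0 k hk) (hp0 k hk)
  calc ∑ k ∈ s, l k ^ 2 * p k - (∑ k ∈ s, l k * p k) ^ 2
      ≤ ∑ k ∈ s, l k ^ 2 * p k - ∑ k ∈ s, (l k * p k) ^ 2 := sub_le_sub_left hcross _
    _ = ∑ k ∈ s, l k ^ 2 * (p k * (1 - p k)) := by
        rw [← sum_sub_distrib]
        exact sum_congr rfl fun k _ => by ring
    _ ≤ ∑ k ∈ s, p k * (1 - p k) :=
        sum_le_sum fun k hk => mul_le_of_le_one_left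
          (mul_nonneg (hp0 k hk) (sub_nonneg.2 (hp1 k hk))) (pow_le_one₀ (hl0 k hk) (hl1 k hk))

theorem Finset.sum_ite_eq_zero_sub {ι M : Type*} [Fintype ι] [DecidableEq ι] [AddCommGroup M]
    (i : ι) (g : ι → M) : (∑ j, if i = j then 0 else g j) = ∑ j, g j - g i := by
  rw [Finset.sum_ite, Finset.sum_const_zero, zero_add, Finset.filter_ne,
    Finset.sum_erase_eq_sub (Finset.mem_univ i)]

section Spectral

variable {𝕜 E ι : Type*} [RCLike 𝕜] [NormedAddCommGroup E] [InnerProductSpace 𝕜 E] [Fintype ι]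
  {f : OrthonormalBasis ι 𝕜 E} {lam : ι → ℝ} {ρ : E →ₗ[𝕜] E}

theorem inner_basis_apply_of_spectral (hρ : ∀ x, ρ x = ∑ k, ((lam k : 𝕜) * ⟪f k, x⟫_𝕜) • f k)
    (k : ι) (x : E) : ⟪f k, ρ x⟫_𝕜 = lam k * ⟪f k, x⟫_𝕜 := by
  rw [hρ, f.orthonormal.inner_right_fintype]

theorem inner_apply_eq_sum_of_spectral
    (hρ : ∀ x, ρ x = ∑ k, ((lam k : 𝕜) * ⟪f k, x⟫_𝕜) • f k) (x y : E) :
    ⟪x, ρ y⟫_𝕜 = ∑ k, lam k * (⟪x, f k⟫_𝕜 * ⟪f k, y⟫_𝕜) := by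
  rw [← f.sum_inner_mul_inner]
  simp_rw [inner_basis_apply_of_spectral hρ, mul_left_comm]

theorem isSymmetric_of_spectral (hρ : ∀ x, ρ x = ∑ k, ((lam k : 𝕜) * ⟪f k, x⟫_𝕜) • f k) :
    ρ.IsSymmetric := by
  intro x y
  rw [← inner_conj_symm, inner_apply_eq_sum_of_spectral hρ, inner_apply_eq_sum_of_spectral hρ,
    map_sum]
  simp [inner_conj_symm, mul_comm]

theorem norm_sq_apply_of_spectral (hρ : ∀ x, ρ x = ∑ k, ((lam k : 𝕜) * ⟪f k, x⟫_𝕜) • f k)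
    (x : E) : ‖ρ x‖ ^ 2 = ∑ k, lam k ^ 2 * ‖⟪f k, x⟫_𝕜‖ ^ 2 := by
  rw [← f.sum_sq_norm_inner_right]
  simp_rw [inner_basis_apply_of_spectral hρ, norm_mul, mul_pow, RCLike.norm_ofReal, sq_abs]

theorem inner_self_apply_of_spectral (hρ : ∀ x, ρ x = ∑ k, ((lam k : 𝕜) * ⟪f k, x⟫_𝕜) • f k)
    (x : E) : ⟪x, ρ x⟫_𝕜 = ((∑ k, lam k * ‖⟪f k, x⟫_𝕜‖ ^ 2 : ℝ) : 𝕜) := by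
  rw [inner_apply_eq_sum_of_spectral hρ]
  push_cast
  refine Finset.sum_congr rfl fun k _ => ?_
  rw [← inner_conj_symm (f k) x, RCLike.mul_conj, RCLike.norm_conj]

theorem sum_norm_sq_inner_apply_of_spectral
    (hρ : ∀ x, ρ x = ∑ k, ((lam k : 𝕜) * ⟪f k, x⟫_𝕜) • f k) {ι' : Type*} [Fintype ι']
    (e : OrthonormalBasis ι' 𝕜 E) (x : E) :
    ∑ j, ‖⟪x, ρ (e j)⟫_𝕜‖ ^ 2 = ∑ k, lam k ^ 2 * ‖⟪f k, x⟫_𝕜‖ ^ 2 := by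
  simp_rw [← isSymmetric_of_spectral hρ x, e.sum_sq_norm_inner_left, norm_sq_apply_of_spectral hρ]

end Spectral

/-- **`η₂ ≤ δ`:** for a density matrix `ρ = ∑ₖ λₖ|fₖ⟩⟨fₖ|` with eigenbasis `(fₖ)` and any
orthonormal basis `(eᵢ)`, the squared `l²`-coherence `∑_{i≠j} |⟨eᵢ|ρ eⱼ⟩|²` is at most the
squared basis distance `d(B_ρ, B)² = ∑_{i,k} |⟨eᵢ|fₖ⟩|²(1-|⟨eᵢ|fₖ⟩|²)`. -/
theorem stmt_5 (n : ℕ)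
    (lam : Fin n → ℝ) (hlam : ∀ k, 0 ≤ lam k) (hsum : ∑ k, lam k = 1)
    (e f : OrthonormalBasis (Fin n) ℂ (EuclideanSpace ℂ (Fin n)))
    (ρ : EuclideanSpace ℂ (Fin n) →ₗ[ℂ] EuclideanSpace ℂ (Fin n))
    (hρ : ∀ x, ρ x = ∑ k, ((lam k : ℂ) * ⟪f k, x⟫_ℂ) • f k) :
    (∑ i, ∑ j, if i = j then 0 else ‖⟪e i, ρ (e j)⟫_ℂ‖ ^ 2) ≤
      ∑ i, ∑ k, ‖⟪e i, f k⟫_ℂ‖ ^ 2 * (1 - ‖⟪e i, f k⟫_ℂ‖ ^ 2) := by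
  have hlam1 (k : Fin n) : lam k ≤ 1 :=
    hsum ▸ Finset.single_le_sum (fun k _ => hlam k) (Finset.mem_univ k)
  have hp1 (i k : Fin n) : ‖⟪e i, f k⟫_ℂ‖ ^ 2 ≤ 1 := by
    refine (Finset.single_le_sum (f := fun k => ‖⟪e i, f k⟫_ℂ‖ ^ 2) (fun k _ => by positivity)
      (Finset.mem_univ k)).trans_eq ?_
    rw [f.sum_sq_norm_inner_left, e.norm_eq_one, one_pow]
  refine Finset.sum_le_sum fun i _ => ?_
  rw [Finset.sum_ite_eq_zero_sub, sum_norm_sq_inner_apply_of_spectral hρ,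
    inner_self_apply_of_spectral hρ, RCLike.norm_ofReal, sq_abs]
  simp_rw [norm_inner_symm (f _) (e i)]
  exact Finset.sum_sq_mul_sub_sq_sum_mul_le _ (fun k _ => hlam k) (fun k _ => hlam1 k)
    (fun k _ => by positivity) (fun k _ => hp1 i k)
end

section
/- For every constant $c > 0$ there exist a qubit density matrix $\rho$, an orthonormal basis $\mathcal{B}$ of $\mathbb{C}^2$, and a one-dimensional subspace $F$ with projector $\Pi_F$ such that $|\mathrm{tr}(\rho \Pi_F) - \mathrm{tr}(D_{\mathcal{B}}[\rho]\Pi_F)| > \dim(F)\cdot c\,[S(D_{\mathcal{B}}[\rho]) - S(\rho)]$, where $S$ is the von Neumann entropy. Concretely, one may take $\rho = \frac{1}{2}\begin{pmatrix}1 & \varepsilon\\ \varepsilon & 1\end{pmatrix}$ in $\mathcal{B}$ and $F$ spanned by $(\ket{e_1}+\ket{e_2})/\sqrt{2}$, for sufficiently small $\varepsilon > 0$. -/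
open scoped BigOperators ComplexOrder

open Classical in
/-- Von Neumann entropy of a Hermitian matrix, via its eigenvalues
(`0` as junk value for non-Hermitian matrices). -/
noncomputable def vonNeumannEntropy {n : ℕ} (ρ : Matrix (Fin n) (Fin n) ℂ) : ℝ :=
  if h : ρ.IsHermitian then ∑ i, Real.negMulLog (h.eigenvalues i) else 0

/-!
Take `ρ = ½ [[1, ε], [ε, 1]]` and `Π` the projector onto `(e₁ + e₂)/√2`. Then the
deviation `tr(ρΠ) - tr(D[ρ]Π)` is `ε/2`, linear in `ε`, while the relative entropy of coherence
`S(D[ρ]) - S(ρ) = log 2 - binEntropy ((1 + ε)/2)` is at most `ε²` by `log (1 ± ε) ≤ ± ε`.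
Hence `c (S(D[ρ]) - S(ρ)) ≤ c ε² < ε/2` as soon as `ε < 1/(2c)`.
-/

open Matrix Real

lemma vonNeumannEntropy_fin_two {ρ : Matrix (Fin 2) (Fin 2) ℂ} (hρ : ρ.IsHermitian) {a b : ℝ}
    (htr : ρ.trace = a + b) (hdet : ρ.det = a * b) :
    vonNeumannEntropy ρ = negMulLog a + negMulLog b := by
  rw [vonNeumannEntropy, dif_pos hρ, Fin.sum_univ_two]
  have hsum : hρ.eigenvalues 0 + hρ.eigenvalues 1 = a + b := by
    have := hρ.trace_eq_sum_eigenvalues.symm.trans htr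
    rw [Fin.sum_univ_two] at this
    simpa using congrArg Complex.re this
  have hprod : hρ.eigenvalues 0 * hρ.eigenvalues 1 = a * b := by
    have := hρ.det_eq_prod_eigenvalues.symm.trans hdet
    rw [Fin.prod_univ_two] at this
    simpa using congrArg Complex.re this
  generalize hρ.eigenvalues 0 = e₀, hρ.eigenvalues 1 = e₁ at *
  -- Vieta: `e₀` is a root of `(X - a)(X - b)`.
  have hroot : (e₀ - a) * (e₀ - b) = 0 := by linear_combination e₀ * hsum - hprod
  rcases mul_eq_zero.mp hroot with h | h
  · rw [show e₀ = a by linarith, show e₁ = b by linarith]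
  · rw [show e₀ = b by linarith, show e₁ = a by linarith, add_comm]

lemma log_two_sub_binEntropy_le {ε : ℝ} (h₁ : -1 < ε) (h₂ : ε < 1) :
    log 2 - binEntropy ((1 + ε) / 2) ≤ ε ^ 2 := by
  have hp : log (1 + ε) ≤ ε := by linarith [log_le_sub_one_of_pos (by linarith : 0 < 1 + ε)]
  have hm : log (1 - ε) ≤ -ε := by linarith [log_le_sub_one_of_pos (by linarith : 0 < 1 - ε)]
  have hexpand : log 2 - binEntropy ((1 + ε) / 2) =
      (1 + ε) / 2 * log (1 + ε) + (1 - ε) / 2 * log (1 - ε) := by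
    rw [binEntropy_eq_negMulLog_add_negMulLog_one_sub, show 1 - (1 + ε) / 2 = (1 - ε) / 2 by ring,
      negMulLog, negMulLog, log_div (by linarith) two_ne_zero, log_div (by linarith) two_ne_zero]
    ring
  rw [hexpand]
  linarith [mul_le_mul_of_nonneg_left hp (by linarith : 0 ≤ (1 + ε) / 2),
    mul_le_mul_of_nonneg_left hm (by linarith : 0 ≤ (1 - ε) / 2)]

noncomputable def plusProjector : Matrix (Fin 2) (Fin 2) ℂ := !![1 / 2, 1 / 2; 1 / 2, 1 / 2]

noncomputable def coherentState (ε : ℝ) : Matrix (Fin 2) (Fin 2) ℂ :=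
  !![1 / 2, ε / 2; ε / 2, 1 / 2]

lemma plusProjector_isHermitian : plusProjector.IsHermitian := by
  ext i j
  fin_cases i <;> fin_cases j <;> simp [plusProjector, conjTranspose_apply]

lemma plusProjector_mul_self : plusProjector * plusProjector = plusProjector := by
  norm_num [plusProjector, mul_fin_two]

lemma plusProjector_trace : plusProjector.trace = 1 := by
  norm_num [plusProjector, trace_fin_two]

lemma plusProjector_posSemidef : plusProjector.PosSemidef := by
  simpa [plusProjector_isHermitian.eq, plusProjector_mul_self] using
    posSemidef_conjTranspose_mul_self plusProjector

lemma coherentState_eq (ε : ℝ) :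
    coherentState ε =
      ((1 - ε) / 2 : ℝ) • (1 : Matrix (Fin 2) (Fin 2) ℂ) + ε • plusProjector := by
  ext i j
  fin_cases i <;> fin_cases j <;> simp [coherentState, plusProjector] <;> ring

lemma coherentState_posSemidef {ε : ℝ} (h₀ : 0 ≤ ε) (h₁ : ε ≤ 1) :
    (coherentState ε).PosSemidef := by
  rw [coherentState_eq]
  exact (PosSemidef.one.smul (by linarith)).add (plusProjector_posSemidef.smul h₀)

lemma coherentState_isHermitian (ε : ℝ) : (coherentState ε).IsHermitian := by
  ext i j
  fin_cases i <;> fin_cases j <;> simp [coherentState, conjTranspose_apply]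

lemma coherentState_trace (ε : ℝ) : (coherentState ε).trace = 1 := by
  norm_num [coherentState, trace_fin_two]

lemma diagonal_coherentState (ε : ℝ) :
    diagonal (fun i => coherentState ε i i) = diagonal fun _ => (1 / 2 : ℂ) := by
  ext i j
  fin_cases i <;> fin_cases j <;> simp [coherentState]

lemma trace_coherentState_mul_plusProjector_sub (ε : ℝ) :
    (coherentState ε * plusProjector).trace -
      (diagonal (fun i => coherentState ε i i) * plusProjector).trace = (ε / 2 : ℝ) := by
  rw [diagonal_coherentState]
  simp [coherentState, plusProjector, trace_fin_two, mul_apply, Fin.sum_univ_two]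
  ring

lemma vonNeumannEntropy_diagonal_coherentState (ε : ℝ) :
    vonNeumannEntropy (diagonal fun i => coherentState ε i i) = log 2 := by
  have hD : (diagonal fun _ : Fin 2 => (1 / 2 : ℂ)).IsHermitian :=
    isHermitian_diagonal_of_self_adjoint _ (by ext; simp)
  rw [diagonal_coherentState, vonNeumannEntropy_fin_two hD (a := 1 / 2) (b := 1 / 2)]
  · rw [negMulLog, one_div, log_inv]; ring
  · simp [trace_diagonal]; norm_num
  · simp [det_diagonal]; norm_num

lemma vonNeumannEntropy_coherentState (ε : ℝ) :
    vonNeumannEntropy (coherentState ε) = binEntropy ((1 + ε) / 2) := by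
  rw [binEntropy_eq_negMulLog_add_negMulLog_one_sub, show 1 - (1 + ε) / 2 = (1 - ε) / 2 by ring]
  apply vonNeumannEntropy_fin_two (coherentState_isHermitian ε)
  · simp [coherentState, trace_fin_two]; ring
  · rw [coherentState, det_fin_two_of]; push_cast; ring

/-- **The relative entropy of coherence is not a measure of coherence:** for every `c > 0`
there are a qubit density matrix `ρ`, an orthonormal basis (here encoded by taking the
computational basis, in which the diagonal part is `D = diagonal of ρ`), and a
one-dimensional orthogonal projector `Π` such that
`|tr(ρΠ) - tr(DΠ)| > dim F · c · (S(D) - S(ρ))`. -/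
theorem stmt_11 (c : ℝ) (hc : 0 < c) :
    ∃ ρ P : Matrix (Fin 2) (Fin 2) ℂ,
      ρ.PosSemidef ∧ ρ.trace = 1 ∧
      P.IsHermitian ∧ P * P = P ∧ P.trace = 1 ∧
      ‖(ρ * P).trace - (Matrix.diagonal (fun i => ρ i i) * P).trace‖ >
        1 * c *
          (vonNeumannEntropy (Matrix.diagonal fun i => ρ i i) - vonNeumannEntropy ρ) := by
  set ε : ℝ := 1 / (2 * c + 2)
  have hε₀ : 0 < ε := by positivity
  have hε₁ : ε < 1 := by rw [div_lt_one (by linarith)]; linarith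
  have hcε : c * ε < 1 / 2 := by
    rw [mul_one_div, div_lt_div_iff₀ (by linarith) (by norm_num)]; linarith
  refine ⟨coherentState ε, plusProjector, coherentState_posSemidef hε₀.le hε₁.le,
    coherentState_trace ε, plusProjector_isHermitian, plusProjector_mul_self,
    plusProjector_trace, ?_⟩
  rw [trace_coherentState_mul_plusProjector_sub, Complex.norm_real,
    Real.norm_of_nonneg (by linarith), vonNeumannEntropy_diagonal_coherentState,
    vonNeumannEntropy_coherentState]
  calc 1 * c * (log 2 - binEntropy ((1 + ε) / 2))
      ≤ c * ε ^ 2 := by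
        rw [one_mul]
        exact mul_le_mul_of_nonneg_left (log_two_sub_binEntropy_le (by linarith) hε₁) hc.le
    _ = c * ε * ε := by ring
    _ < 1 / 2 * ε := mul_lt_mul_of_pos_right hcε hε₀
    _ = ε / 2 := by ring
end
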